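/- arXiv:1608.07028 — 5 statements merged into one kernel-verified Lean document; each statement's English description precedes it below -/
import Mathlib

section
/- Every properly edge-coloured complete graph on n vertices contains a rainbow path with at least n/2 - 1 edges. -/
/-- An edge colouring is proper if distinct edges of the graph sharing a vertex
receive distinct colours. -/
def IsProperEdgeColoring {V C : Type*} (G : SimpleGraph V) (c : Sym2 V → C) : Prop :=
  ∀ e ∈ G.edgeSet, ∀ f ∈ G.edgeSet, e ≠ f → (∃ v, v ∈ e ∧ v ∈ f) → c e ≠ c f

/-- Every properly edge-coloured complete graph on `n` vertices contains a rainbow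
path with at least `n/2 - 1` edges. -/
theorem stmt0 (n : ℕ) (hn : 1 ≤ n) (C : Type*) (c : Sym2 (Fin n) → C)
    (hc : IsProperEdgeColoring (⊤ : SimpleGraph (Fin n)) c) :
    ∃ (u v : Fin n) (p : (⊤ : SimpleGraph (Fin n)).Walk u v),
      p.IsPath ∧ (p.edges.map c).Nodup ∧ (n : ℝ) / 2 - 1 ≤ (p.length : ℝ) := by
  classical
  have key : ∀ k : ℕ, 2 * k ≤ n → ∃ (u v : Fin n) (p : (⊤ : SimpleGraph (Fin n)).Walk u v),
      p.IsPath ∧ (p.edges.map c).Nodup ∧ p.length = k := by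
    intro k
    induction k with
    | zero =>
      intro _
      exact ⟨⟨0, hn⟩, ⟨0, hn⟩, .nil, by simp, by simp, rfl⟩
    | succ k ih =>
      intro hk
      obtain ⟨u, v, p, hp, hnd, hlen⟩ := ih (by omega)
      set T : Finset (Fin n) := p.support.toFinsetᶜ with hT
      have hsupp : p.support.toFinset.card = k + 1 := by
        rw [List.toFinset_card_of_nodup hp.support_nodup,
          SimpleGraph.Walk.length_support, hlen]
      have hTcard : T.card = n - (k + 1) := by
        rw [hT, Finset.card_compl, hsupp, Fintype.card_fin]
      have hF : (p.edges.map c).toFinset.card ≤ k := by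
        calc (p.edges.map c).toFinset.card ≤ (p.edges.map c).length :=
          (p.edges.map c).toFinset_card_le
        _ = k := by rw [List.length_map, SimpleGraph.Walk.length_edges, hlen]
      have hu : u ∈ p.support := p.start_mem_support
      have hmemT : ∀ a : Fin n, a ∈ T → a ∉ p.support := by
        intro a ha
        simp only [hT, Finset.mem_compl, List.mem_toFinset] at ha
        exact ha
      have hw : ∃ w ∈ T, c s(w, u) ∉ (p.edges.map c).toFinset := by
        by_contra h
        push_neg at h
        have hinj : Set.InjOn (fun w => c s(w, u)) T := by
          intro a ha b hb hab
          by_contra hne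
          have hau : a ≠ u := fun h => (hmemT a ha) (h ▸ hu)
          have hbu : b ≠ u := fun h => (hmemT b hb) (h ▸ hu)
          exact hc s(a, u) (by simpa using hau) s(b, u) (by simpa using hbu)
            (by simp [Sym2.eq_iff]; tauto) ⟨u, by simp, by simp⟩ hab
        have := Finset.card_le_card_of_injOn _ h hinj
        omega
      obtain ⟨w, hwT, hwc⟩ := hw
      have hwS : w ∉ p.support := hmemT w hwT
      have hwu : w ≠ u := fun h => hwS (h ▸ hu)
      have adj : (⊤ : SimpleGraph (Fin n)).Adj w u := by simpa using hwu
      refine ⟨w, v, .cons adj p, hp.cons hwS, ?_, by simp [hlen]⟩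
      simp only [SimpleGraph.Walk.edges_cons, List.map_cons, List.nodup_cons]
      exact ⟨fun hmem => hwc (List.mem_toFinset.2 hmem), hnd⟩
  obtain ⟨u, v, p, hp, hnd, hlen⟩ := key (n / 2) (by omega)
  refine ⟨u, v, p, hp, hnd, ?_⟩
  have h2 : n ≤ 2 * (n / 2) + 1 := by omega
  have h2' : (n : ℝ) ≤ 2 * ((n / 2 : ℕ) : ℝ) + 1 := by exact_mod_cast h2
  rw [hlen]
  linarith
end

section
/- Let G be a properly edge-coloured graph on vertex set V, let b, m, r be positive integers with 2*m*r <= b, let P = {P_1, ..., P_r} be a rainbow path forest in G, and let H be a subgraph of G such that no colour appears both on an edge of H and on an edge of P, every vertex of H has degree at least 3b in H, and for any two disjoint vertex sets A, B of size b there are at least b+1 edges of H between A and B. Then either P_1 has at least |V(P)| - 2b vertices (where V(P) is the union of vertex sets of the P_i), or there exist two edges e_1, e_2 of H and a rainbow path forest P' = {P'_1, ..., P'_r} with edge set contained in E(P) ∪ {e_1, e_2} such that P'_1 has at least |V(P_1)| + m vertices. -/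
/-- A path forest with `r` paths in a graph `G`: a collection of `r` pairwise
vertex-disjoint paths in `G`. -/
structure PathForest {V : Type*} (G : SimpleGraph V) (r : ℕ) where
  first : Fin r → V
  last : Fin r → V
  path : ∀ i, G.Walk (first i) (last i)
  isPath : ∀ i, (path i).IsPath
  disj : ∀ i j, i ≠ j → ∀ v, v ∈ (path i).support → v ∉ (path j).support

/-- A path forest is rainbow (w.r.t. a colouring `c`) if all edges appearing on
its paths have pairwise distinct colours. -/
def PathForest.IsRainbow {V C : Type*} {G : SimpleGraph V} {r : ℕ}
    (P : PathForest G r) (c : Sym2 V → C) : Prop :=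
  ((((List.finRange r).flatMap fun i => (P.path i).edges)).map c).Nodup

/-- Total number of edges of a path forest. -/
def PathForest.edgeCount {V : Type*} {G : SimpleGraph V} {r : ℕ} (P : PathForest G r) : ℕ :=
  ∑ i, (P.path i).length

/-- Total number of vertices covered by a path forest. -/
def PathForest.vertexCount {V : Type*} {G : SimpleGraph V} {r : ℕ} (P : PathForest G r) : ℕ :=
  ∑ i, (P.path i).support.length

/-!
Let `x` be the last vertex of `P₁`. Call a vertex `w` of another path `P_j` an entry point if it is
not the first vertex of `P_j` and at least `m` vertices of `P_j` lie from `w` on: a path `W` ending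
at `a ~ w` that can replace `P₁` is then prolonged by the tail of `P_j` from `w`, while `P_j` keeps
its part before `w`, and `P₁` gains `m` vertices. If `P₁` misses more than `2b` vertices of the
forest, at most `m(r - 1) ≤ b` of those are not entry points, so there are more than `b` entry
points. If `x` has an `H`-neighbour among them, one edge suffices. Otherwise at most `b` of the
`3b` neighbours of `x` lie on other paths, so `b` of them lie off the forest or `b` lie on `P₁`.
This gives `b` endpoints `a` of paths replacing `P₁` with one new edge `e_a`: `P₁ + xa` in the
first case, and a Pósa rotation of `P₁` at the neighbour `u` of `x`, ending at the successor of
`u`, in the second. The expansion of `H` yields `b + 1` edges between these endpoints and `b` entry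
points; as the colouring is proper, at most one edge at each `a` has the colour of `e_a`.
-/

open SimpleGraph Walk

section

variable {V : Type*} {G : SimpleGraph V} {r : ℕ}

theorem IsProperEdgeColoring.mono {C : Type*} {c : Sym2 V → C} {H : SimpleGraph V}
    (hc : IsProperEdgeColoring G c) (hHG : H ≤ G) : IsProperEdgeColoring H c :=
  fun e he f hf => hc e (edgeSet_mono hHG he) f (edgeSet_mono hHG hf)

theorem IsProperEdgeColoring.exists_adj_color_ne {C : Type*} {c : Sym2 V → C}
    {H : SimpleGraph V} [DecidableRel H.Adj] (hc : IsProperEdgeColoring H c)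
    {A B : Finset V} {b : ℕ} (hA : A.card ≤ b) (hAB : b < (H.interedges A B).card)
    (forbidden : V → C) : ∃ a ∈ A, ∃ w ∈ B, H.Adj a w ∧ c s(a, w) ≠ forbidden a := by
  by_contra! hall
  -- each `a ∈ A` has at most one `H`-neighbour in `B` joined by an edge of colour `forbidden a`
  have hinj : Set.InjOn Prod.fst (H.interedges A B : Set (V × V)) := by
    rintro ⟨a, w⟩ haw ⟨a', w'⟩ haw' (rfl : a = a')
    simp only [Finset.mem_coe, SimpleGraph.mk_mem_interedges_iff] at haw haw'
    have hedge : s(a, w) = s(a, w') := by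
      by_contra hne
      exact hc _ haw.2.2 _ haw'.2.2 hne ⟨a, Sym2.mem_mk_left _ _, Sym2.mem_mk_left _ _⟩
        ((hall a haw.1 w haw.2.1 haw.2.2).trans (hall a haw'.1 w' haw'.2.1 haw'.2.2).symm)
    rw [Sym2.congr_right.1 hedge]
  have := Finset.card_le_card_of_injOn Prod.fst (fun x hx => (H.mem_interedges_iff.1 hx).1) hinj
  omega

theorem Finset.card_le_card_inter_add_card_sdiff_add_card_sdiff {α : Type*} [DecidableEq α]
    {N E : Finset α} (Z S : Finset α) (h : Disjoint N E) :
    N.card ≤ (N ∩ Z).card + (N \ (Z ∪ S)).card + (S \ E).card := by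
  have hN : N ⊆ (N ∩ Z) ∪ (N \ (Z ∪ S)) ∪ (S \ E) := by
    intro v hv
    have := Finset.disjoint_left.1 h hv
    simp only [Finset.mem_union, Finset.mem_inter, Finset.mem_sdiff]
    tauto
  exact (Finset.card_le_card hN).trans ((Finset.card_union_le _ _).trans
    (Nat.add_le_add_right (Finset.card_union_le _ _) _))

namespace SimpleGraph.Walk

theorem IsPath.exists_rotation {u v : V} {p : G.Walk u v} (hp : p.IsPath) {n : ℕ}
    (hn0 : 0 < n) (hn : n ≤ p.length) (h : G.Adj v (p.getVert (n - 1))) :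
    ∃ W : G.Walk u (p.getVert n), W.IsPath ∧ W.support.Perm p.support ∧
      ∀ e ∈ W.edges, e ∈ p.edges ∨ e = s(v, p.getVert (n - 1)) := by
  let W := (p.take (n - 1)).append (cons h.symm (p.drop n).reverse)
  have hperm : W.support.Perm p.support := by
    have hsupp : W.support = p.support.take n ++ (p.support.drop n).reverse := by
      simp [W, support_append, support_take, Nat.sub_add_cancel hn0, min_eq_left hn]
    rw [hsupp]
    conv_rhs => rw [← List.take_append_drop n p.support]
    exact (List.reverse_perm _).append_left _
  refine ⟨W, (isPath_def _).2 (hperm.nodup_iff.2 hp.support_nodup), hperm, fun e he => ?_⟩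
  simp only [W, edges_append, edges_cons, edges_reverse, edges_take, edges_drop, List.mem_append,
    List.mem_cons, List.mem_reverse] at he
  rcases he with he | he | he
  · exact Or.inl (List.mem_of_mem_take he)
  · exact Or.inr (he.trans (Sym2.eq_swap))
  · exact Or.inl (List.mem_of_mem_drop he)

theorem IsPath.idxOf_getVert [DecidableEq V] {u v : V} {p : G.Walk u v} (hp : p.IsPath) {n : ℕ}
    (hn : n ≤ p.length) : p.support.idxOf (p.getVert n) = n := by
  refine hp.getVert_injOn ?_ hn (p.getVert_support_idxOf (p.getVert_mem_support n))
  have := List.idxOf_lt_length_of_mem (p.getVert_mem_support n)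
  simp only [length_support] at this
  exact Nat.lt_succ_iff.1 this

variable [DecidableEq V]

/-- The endpoints of the paths obtained from `p` by a rotation: closing `p` with an `H`-edge from
its last vertex to the vertex at position `n - 1` and deleting the edge into position `n`. -/
def rotationEnds (H : SimpleGraph V) [DecidableRel H.Adj] {u v : V} (p : G.Walk u v) :
    Finset V :=
  ((Finset.Icc 1 p.length).filter fun n => H.Adj v (p.getVert (n - 1))).image p.getVert

variable {H : SimpleGraph V} [DecidableRel H.Adj] {u v : V} {p : G.Walk u v}

theorem IsPath.card_neighborFinset_inter_support_le [Fintype V] (hp : p.IsPath) :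
    (H.neighborFinset v ∩ p.support.toFinset).card ≤ (p.rotationEnds H).card := by
  let N := (Finset.Icc 1 p.length).filter fun n => H.Adj v (p.getVert (n - 1))
  have hsub : H.neighborFinset v ∩ p.support.toFinset ⊆ N.image fun n => p.getVert (n - 1) := by
    intro w hw
    simp only [Finset.mem_inter, mem_neighborFinset, List.mem_toFinset] at hw
    obtain ⟨hvw, n, rfl, hn⟩ := hw.1.symm, mem_support_iff_exists_getVert.1 hw.2
    have hnv : n ≠ p.length := fun h => hvw.ne (by rw [h, getVert_length])
    refine Finset.mem_image.2 ⟨n + 1, ?_, by simp⟩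
    simp only [N, Finset.mem_filter, Finset.mem_Icc, Nat.add_sub_cancel]
    exact ⟨⟨by omega, by omega⟩, hvw.symm⟩
  refine (Finset.card_le_card hsub).trans (Finset.card_image_le.trans_eq ?_)
  refine (Finset.card_image_of_injOn (hp.getVert_injOn.mono fun n hn => ?_)).symm
  simp only [N, Finset.coe_filter, Finset.mem_Icc] at hn
  exact hn.1.2

theorem IsPath.exists_rotation_of_mem_rotationEnds (hp : p.IsPath) (hHG : H ≤ G) {a : V}
    (ha : a ∈ p.rotationEnds H) :
    H.Adj v (p.getVert (p.support.idxOf a - 1)) ∧ ∃ W : G.Walk u a, W.IsPath ∧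
      W.support.Perm p.support ∧
      ∀ e ∈ W.edges, e ∈ p.edges ∨ e = s(v, p.getVert (p.support.idxOf a - 1)) := by
  simp only [rotationEnds, Finset.mem_image, Finset.mem_filter, Finset.mem_Icc] at ha
  obtain ⟨n, ⟨⟨hn0, hn⟩, hadj⟩, rfl⟩ := ha
  rw [hp.idxOf_getVert hn]
  exact ⟨hadj, hp.exists_rotation hn0 hn (hHG hadj)⟩

end SimpleGraph.Walk

namespace PathForest

def edgeSet (P : PathForest G r) : Set (Sym2 V) := {e | ∃ i, e ∈ (P.path i).edges}

theorem nodup_flatMap_edges (P : PathForest G r) :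
    ((List.finRange r).flatMap fun i => (P.path i).edges).Nodup := by
  refine List.nodup_flatMap.2 ⟨fun i _ => (P.isPath i).edges_nodup, ?_⟩
  refine (List.nodup_finRange r).imp fun {i j} hij e hei hej => ?_
  induction e with
  | h x y =>
    exact P.disj i j hij x ((P.path i).fst_mem_support_of_mem_edges hei)
      ((P.path j).fst_mem_support_of_mem_edges hej)

theorem isRainbow_iff_injOn {C : Type*} (P : PathForest G r) (c : Sym2 V → C) :
    P.IsRainbow c ↔ Set.InjOn c P.edgeSet := by
  rw [IsRainbow, List.nodup_map_iff_inj_on P.nodup_flatMap_edges]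
  simp [Set.InjOn, edgeSet]

theorem IsRainbow.of_edgeSet_subset {C : Type*} {c : Sym2 V → C} {P P' : PathForest G r}
    {e₁ e₂ : Sym2 V} (hP : P.IsRainbow c) (hsub : P'.edgeSet ⊆ P.edgeSet ∪ {e₁, e₂})
    (he₁ : c e₁ ∉ c '' P.edgeSet) (he₂ : c e₂ ∉ c '' P.edgeSet) (he : c e₁ = c e₂ → e₁ = e₂) :
    P'.IsRainbow c := by
  rw [isRainbow_iff_injOn] at hP ⊢
  refine Set.InjOn.mono hsub ?_
  rintro x (hx | rfl | rfl) y (hy | rfl | rfl) hxy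
  · exact hP hx hy hxy
  · exact absurd ⟨x, hx, hxy⟩ he₁
  · exact absurd ⟨x, hx, hxy⟩ he₂
  · exact absurd ⟨y, hy, hxy.symm⟩ he₁
  · rfl
  · exact he hxy
  · exact absurd ⟨y, hy, hxy.symm⟩ he₂
  · exact (he hxy.symm).symm
  · rfl

section update

def update (P : PathForest G r) (i : Fin r) {t : V} (W : G.Walk (P.first i) t)
    (hW : W.IsPath) (hWd : ∀ j ≠ i, ∀ v ∈ W.support, v ∉ (P.path j).support) :
    PathForest G r where
  first := P.first
  last := Function.update P.last i t
  path j := if h : j = i then W.copy (by rw [h]) (by simp [h])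
    else (P.path j).copy rfl (by simp [h])
  isPath j := by
    split_ifs with h
    · simpa using hW
    · simpa using P.isPath j
  disj j k hjk v hvj hvk := by
    split_ifs at hvj hvk with h₁ h₂ h₂
    · exact hjk (h₁.trans h₂.symm)
    · exact hWd k h₂ v (by simpa using hvj) (by simpa using hvk)
    · exact hWd j h₁ v (by simpa using hvk) (by simpa using hvj)
    · exact P.disj j k hjk v (by simpa using hvj) (by simpa using hvk)

variable (P : PathForest G r) (i : Fin r) {t : V} (W : G.Walk (P.first i) t) (hW : W.IsPath)
  (hWd : ∀ j ≠ i, ∀ v ∈ W.support, v ∉ (P.path j).support)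

theorem support_update_path (j : Fin r) : ((P.update i W hW hWd).path j).support =
    if j = i then W.support else (P.path j).support := by
  by_cases h : j = i
  · subst h
    simp [update]
  · simp [update, h]

theorem edges_update_path (j : Fin r) : ((P.update i W hW hWd).path j).edges =
    if j = i then W.edges else (P.path j).edges := by
  by_cases h : j = i
  · subst h
    simp [update]
  · simp [update, h]

theorem length_update_path_self : ((P.update i W hW hWd).path i).length = W.length := by
  simp [update]

theorem edgeSet_update_subset :
    (P.update i W hW hWd).edgeSet ⊆ P.edgeSet ∪ {e | e ∈ W.edges} := by
  rintro e ⟨j, he⟩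
  rw [edges_update_path] at he
  split_ifs at he
  · exact Or.inr he
  · exact Or.inl ⟨j, he⟩

end update

theorem exists_extend_through (P : PathForest G r) {z j : Fin r} (hjz : j ≠ z) {a : V}
    (W : G.Walk (P.first z) a) (hW : W.IsPath)
    (hWd : ∀ i ≠ z, ∀ v ∈ W.support, v ∉ (P.path i).support)
    {k : ℕ} (hk0 : 0 < k) (hk : k ≤ (P.path j).length) (ha : G.Adj a ((P.path j).getVert k)) :
    ∃ P' : PathForest G r,
      P'.edgeSet ⊆ P.edgeSet ∪ {e | e ∈ W.edges} ∪ {s(a, (P.path j).getVert k)} ∧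
      (P'.path z).length = W.length + 1 + ((P.path j).length - k) := by
  set p := P.path j
  have hp : p.IsPath := P.isPath j
  have hsupp_take : (p.take (k - 1)).support = p.support.take k := by
    simp [support_take, Nat.sub_add_cancel hk0]
  have hsupp_drop : (p.drop k).support = p.support.drop k := by simp [min_eq_left hk]
  have htake_drop : ∀ v ∈ (p.take (k - 1)).support, v ∉ (p.drop k).support := by
    rw [hsupp_take, hsupp_drop]
    exact fun v hv hv' => List.disjoint_take_drop hp.support_nodup le_rfl hv hv'
  have htake_sub : ∀ v ∈ (p.take (k - 1)).support, v ∈ p.support := fun v hv =>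
    List.mem_of_mem_take (hsupp_take ▸ hv)
  have hdrop_sub : ∀ v ∈ (p.drop k).support, v ∈ p.support := fun v hv =>
    List.mem_of_mem_drop (hsupp_drop ▸ hv)
  let P₁ := P.update j (p.take (k - 1)) (hp.take _)
    (fun i hi v hv => P.disj j i hi.symm v (htake_sub v hv))
  let W₁ : G.Walk (P.first z) (P.last j) := W.append (cons ha (p.drop k))
  have hW₁supp : ∀ v, v ∈ W₁.support ↔ v ∈ W.support ∨ v ∈ (p.drop k).support := by
    simp [W₁, support_append, hsupp_drop]
  have hW₁ : W₁.IsPath := by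
    rw [isPath_def, support_append, support_cons, List.tail_cons]
    exact hW.support_nodup.append (hp.drop k).support_nodup
      fun v hv hv' => hWd j hjz v hv (hdrop_sub v hv')
  have hW₁d : ∀ i ≠ z, ∀ v ∈ W₁.support, v ∉ (P₁.path i).support := by
    intro i hiz v hv
    rw [support_update_path]
    split_ifs with hij
    · subst hij
      rcases (hW₁supp v).1 hv with hv | hv
      · exact fun h => hWd i hiz v hv (htake_sub v h)
      · exact fun h => htake_drop v h hv
    · rcases (hW₁supp v).1 hv with hv | hv
      · exact hWd i hiz v hv
      · exact P.disj j i (Ne.symm hij) v (hdrop_sub v hv)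
  refine ⟨P₁.update z W₁ hW₁ hW₁d, fun e he => ?_, ?_⟩
  · rcases edgeSet_update_subset _ _ _ _ _ he with he | he
    · rcases edgeSet_update_subset _ _ _ _ _ he with he | he
      · exact Or.inl (Or.inl he)
      · exact Or.inl (Or.inl ⟨j, List.mem_of_mem_take (by simpa [edges_take] using he)⟩)
    · change e ∈ (W.append (cons ha (p.drop k))).edges at he
      rw [edges_append, edges_cons, List.mem_append, List.mem_cons] at he
      rcases he with he | he | he
      · exact Or.inl (Or.inr he)
      · exact Or.inr he
      · exact Or.inl (Or.inl ⟨j, List.mem_of_mem_drop (edges_drop p k ▸ he)⟩)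
  · refine (length_update_path_self P₁ z W₁ hW₁ hW₁d).trans ?_
    change (W.append (cons ha (p.drop k))).length = _
    simp only [length_append, length_cons, drop_length]
    omega

/-- `W` can take the place of `P_z` in the forest, at the cost of the one new edge `e`. -/
def IsReroute (P : PathForest G r) (z : Fin r) (e : Sym2 V) {a : V} (W : G.Walk (P.first z) a) :
    Prop :=
  W.IsPath ∧ (∀ i ≠ z, ∀ v ∈ W.support, v ∉ (P.path i).support) ∧
    (P.path z).length ≤ W.length ∧ ∀ f ∈ W.edges, f ∈ P.edgeSet ∨ f = e

theorem isReroute_self (P : PathForest G r) (z : Fin r) (e : Sym2 V) :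
    P.IsReroute z e (P.path z) :=
  ⟨P.isPath z, fun i hi v hv => P.disj z i hi.symm v hv, le_rfl, fun _ hf => Or.inl ⟨z, hf⟩⟩

theorem isReroute_concat {P : PathForest G r} {z : Fin r} {a : V} (h : G.Adj (P.last z) a)
    (ha : ∀ i, a ∉ (P.path i).support) :
    P.IsReroute z s(P.last z, a) ((P.path z).concat h) := by
  refine ⟨(P.isPath z).concat (ha z) h, fun i hi v hv => ?_, by simp, fun f hf => ?_⟩
  · rw [support_concat, List.mem_append, List.mem_singleton] at hv
    rcases hv with hv | rfl
    · exact P.disj z i hi.symm v hv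
    · exact ha i
  · rw [edges_concat, List.concat_eq_append, List.mem_append, List.mem_singleton] at hf
    exact hf.imp_left fun hf => ⟨z, hf⟩

variable [DecidableEq V]

section

variable (P : PathForest G r)

def verticesOff (z : Fin r) : Finset V :=
  (Finset.univ.erase z).biUnion fun j => (P.path j).support.toFinset

/-- Entering a path `P_j ≠ P_z` at such a vertex from the end of `P_z` and keeping the tail of
`P_j` gains `m` vertices. -/
def entryPoints (z : Fin r) (m : ℕ) : Finset V :=
  (Finset.univ.erase z).biUnion fun j =>
    (Finset.Icc 1 ((P.path j).length + 1 - m)).image (P.path j).getVert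

variable {P}

@[simp]
theorem mem_verticesOff {z : Fin r} {v : V} :
    v ∈ P.verticesOff z ↔ ∃ j ≠ z, v ∈ (P.path j).support := by
  simp [verticesOff]

theorem exists_of_mem_entryPoints {z : Fin r} {m : ℕ} {w : V} (hw : w ∈ P.entryPoints z m) :
    ∃ j ≠ z, ∃ k, 0 < k ∧ k + m ≤ (P.path j).length + 1 ∧ (P.path j).getVert k = w := by
  simp only [entryPoints, Finset.mem_biUnion, Finset.mem_erase, Finset.mem_image,
    Finset.mem_Icc] at hw
  obtain ⟨j, ⟨hjz, -⟩, k, ⟨hk0, hk⟩, rfl⟩ := hw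
  exact ⟨j, hjz, k, hk0, by omega, rfl⟩

variable (P)

theorem entryPoints_subset_verticesOff (z : Fin r) (m : ℕ) :
    P.entryPoints z m ⊆ P.verticesOff z :=
  Finset.biUnion_mono fun j _ _ hw => by
    obtain ⟨k, -, rfl⟩ := Finset.mem_image.1 hw
    exact List.mem_toFinset.2 ((P.path j).getVert_mem_support k)

theorem pairwiseDisjoint_support_toFinset (s : Set (Fin r)) :
    s.PairwiseDisjoint fun j => (P.path j).support.toFinset :=
  fun i _ j _ hij => Finset.disjoint_left.2 fun v hvi hvj =>
    P.disj i j hij v (List.mem_toFinset.1 hvi) (List.mem_toFinset.1 hvj)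

theorem card_verticesOff (z : Fin r) :
    (P.verticesOff z).card = ∑ j ∈ Finset.univ.erase z, (P.path j).support.length := by
  rw [verticesOff, Finset.card_biUnion (P.pairwiseDisjoint_support_toFinset _)]
  exact Finset.sum_congr rfl fun j _ => List.toFinset_card_of_nodup (P.isPath j).support_nodup

theorem card_verticesOff_le (z : Fin r) {m : ℕ} (hm : 0 < m) :
    (P.verticesOff z).card ≤ (P.entryPoints z m).card + m * (r - 1) := by
  have hdisj : ((Finset.univ.erase z : Finset (Fin r)) : Set (Fin r)).PairwiseDisjoint
      fun j => (Finset.Icc 1 ((P.path j).length + 1 - m)).image (P.path j).getVert :=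
    (P.pairwiseDisjoint_support_toFinset _).mono fun j w hw => by
      obtain ⟨k, -, rfl⟩ := Finset.mem_image.1 hw
      exact List.mem_toFinset.2 ((P.path j).getVert_mem_support k)
  have hcard : ∀ j, ((Finset.Icc 1 ((P.path j).length + 1 - m)).image (P.path j).getVert).card =
      (P.path j).length + 1 - m := fun j => by
    rw [Finset.card_image_of_injOn ((P.isPath j).getVert_injOn.mono fun k hk => ?_),
      Nat.card_Icc, Nat.add_sub_cancel]
    simp only [Finset.coe_Icc, Set.mem_Icc] at hk
    change k ≤ _
    omega
  have hr : (Finset.univ.erase z).card = r - 1 := by simp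
  rw [card_verticesOff, entryPoints, Finset.card_biUnion hdisj,
    Finset.sum_congr rfl fun j _ => hcard j]
  calc ∑ j ∈ Finset.univ.erase z, (P.path j).support.length
      ≤ ∑ j ∈ Finset.univ.erase z, ((P.path j).length + 1 - m + m) :=
        Finset.sum_le_sum fun j _ => by rw [length_support]; omega
    _ = _ := by rw [Finset.sum_add_distrib, Finset.sum_const, hr, smul_eq_mul, mul_comm]

end

variable {P : PathForest G r} {C : Type*} {c : Sym2 V → C} {z : Fin r} {m : ℕ}

theorem exists_isReroute_of_mem_rotationEnds {H : SimpleGraph V} [DecidableRel H.Adj]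
    (hHG : H ≤ G) {a : V} (ha : a ∈ (P.path z).rotationEnds H) :
    H.Adj (P.last z) ((P.path z).getVert ((P.path z).support.idxOf a - 1)) ∧
      ∃ W : G.Walk (P.first z) a,
        P.IsReroute z s(P.last z, (P.path z).getVert ((P.path z).support.idxOf a - 1)) W := by
  obtain ⟨hadj, W, hW, hperm, hWe⟩ := (P.isPath z).exists_rotation_of_mem_rotationEnds hHG ha
  refine ⟨hadj, W, hW, fun i hi v hv => P.disj z i hi.symm v (hperm.subset hv), ?_,
    fun f hf => (hWe f hf).imp_left fun hf => ⟨z, hf⟩⟩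
  have := hperm.length_eq
  rw [length_support, length_support] at this
  omega

theorem exists_rainbow_extension (hP : P.IsRainbow c) (hm : 0 < m) {a w : V} {e : Sym2 V}
    {W : G.Walk (P.first z) a} (hW : P.IsReroute z e W)
    (hw : w ∈ P.entryPoints z m) (haw : G.Adj a w)
    (he : c e ∉ c '' P.edgeSet) (haw_c : c s(a, w) ∉ c '' P.edgeSet)
    (hne : c e = c s(a, w) → e = s(a, w)) :
    ∃ P' : PathForest G r, P'.IsRainbow c ∧ P'.edgeSet ⊆ P.edgeSet ∪ {e, s(a, w)} ∧
      (P.path z).length + m ≤ (P'.path z).length := by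
  obtain ⟨hWp, hWd, hWlen, hWe⟩ := hW
  obtain ⟨j, hjz, k, hk0, hkm, rfl⟩ := exists_of_mem_entryPoints hw
  obtain ⟨P', hsub, hlen⟩ := P.exists_extend_through hjz W hWp hWd hk0 (by omega) haw
  have hsub' : P'.edgeSet ⊆ P.edgeSet ∪ {e, s(a, (P.path j).getVert k)} := by
    intro f hf
    rcases hsub hf with (hf | hf) | rfl
    · exact Or.inl hf
    · rcases hWe f hf with hf | rfl
      · exact Or.inl hf
      · exact Or.inr (Or.inl rfl)
    · exact Or.inr (Or.inr rfl)
  exact ⟨P', hP.of_edgeSet_subset hsub' he haw_c hne, hsub', by omega⟩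

variable {H : SimpleGraph V} [DecidableRel H.Adj] {b : ℕ}

theorem exists_extension_of_reroutes (hc : IsProperEdgeColoring H c) (hP : P.IsRainbow c)
    (hHG : H ≤ G) (hcol : ∀ e ∈ H.edgeSet, c e ∉ c '' P.edgeSet) (hm : 0 < m)
    (hexp : ∀ A B : Finset V, Disjoint A B → A.card = b → B.card = b →
      b + 1 ≤ (H.interedges A B).card)
    (hentry : b ≤ (P.entryPoints z m).card) {A : Finset V} (hA : b ≤ A.card)
    (e : V → Sym2 V) (he : ∀ a ∈ A, e a ∈ H.edgeSet)
    (hW : ∀ a ∈ A, ∃ W : G.Walk (P.first z) a, P.IsReroute z (e a) W) :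
    ∃ e₁ ∈ H.edgeSet, ∃ e₂ ∈ H.edgeSet, ∃ P' : PathForest G r, P'.IsRainbow c ∧
      P'.edgeSet ⊆ P.edgeSet ∪ {e₁, e₂} ∧ (P.path z).length + m ≤ (P'.path z).length := by
  obtain ⟨A', hA'A, hA'⟩ := Finset.exists_subset_card_eq hA
  obtain ⟨B, hB, hBcard⟩ := Finset.exists_subset_card_eq hentry
  have hAB : Disjoint A' B := Finset.disjoint_left.2 fun a ha hb => by
    obtain ⟨W, -, hWd, -⟩ := hW a (hA'A ha)
    obtain ⟨j, hjz, k, -, -, rfl⟩ := exists_of_mem_entryPoints (hB hb)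
    exact hWd j hjz _ W.end_mem_support ((P.path j).getVert_mem_support k)
  obtain ⟨a, ha, w, hw, hadj, hcne⟩ :=
    hc.exists_adj_color_ne hA'.le (hexp A' B hAB hA' hBcard) fun a => c (e a)
  obtain ⟨W, hW⟩ := hW a (hA'A ha)
  have haw : s(a, w) ∈ H.edgeSet := hadj
  obtain ⟨P', hP', hsub, hlen⟩ := exists_rainbow_extension hP hm hW (hB hw) (hHG hadj)
    (hcol _ (he a (hA'A ha))) (hcol _ haw) fun h => absurd h.symm hcne
  exact ⟨e a, he a (hA'A ha), s(a, w), haw, P', hP', hsub, hlen⟩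

theorem exists_extension [Fintype V] (hc : IsProperEdgeColoring H c) (hP : P.IsRainbow c)
    (hHG : H ≤ G) (hcol : ∀ e ∈ H.edgeSet, c e ∉ c '' P.edgeSet) (hm : 0 < m)
    (hdeg : 3 * b ≤ H.degree (P.last z))
    (hexp : ∀ A B : Finset V, Disjoint A B → A.card = b → B.card = b →
      b + 1 ≤ (H.interedges A B).card)
    (hentry : b ≤ (P.entryPoints z m).card)
    (hgap : (P.verticesOff z \ P.entryPoints z m).card ≤ b) :
    ∃ e₁ ∈ H.edgeSet, ∃ e₂ ∈ H.edgeSet, ∃ P' : PathForest G r, P'.IsRainbow c ∧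
      P'.edgeSet ⊆ P.edgeSet ∪ {e₁, e₂} ∧ (P.path z).length + m ≤ (P'.path z).length := by
  set x := P.last z
  set p := P.path z
  by_cases hdirect : Disjoint (H.neighborFinset x) (P.entryPoints z m)
  swap
  · obtain ⟨w, hxw, hw⟩ := Finset.not_disjoint_iff.1 hdirect
    rw [mem_neighborFinset] at hxw
    obtain ⟨P', hP', hsub, hlen⟩ := exists_rainbow_extension hP hm (P.isReroute_self z _) hw
      (hHG hxw) (hcol _ hxw) (hcol _ hxw) fun _ => rfl
    exact ⟨_, hxw, _, hxw, P', hP', hsub, hlen⟩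
  set N := H.neighborFinset x
  set O := N \ (p.support.toFinset ∪ P.verticesOff z)
  have hcount : 2 * b ≤ (N ∩ p.support.toFinset).card + O.card := by
    have : N.card ≤ (N ∩ p.support.toFinset).card + O.card +
        (P.verticesOff z \ P.entryPoints z m).card :=
      Finset.card_le_card_inter_add_card_sdiff_add_card_sdiff _ _ hdirect
    rw [card_neighborFinset_eq_degree] at this
    omega
  rcases le_or_gt b O.card with hO | hO
  · refine exists_extension_of_reroutes hc hP hHG hcol hm hexp hentry hO
      (fun a => s(x, a))
      (fun a ha => (mem_neighborFinset _ _ _).1 (Finset.mem_sdiff.1 ha).1) fun a ha => ?_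
    simp only [O, Finset.mem_sdiff, Finset.mem_union, List.mem_toFinset, not_or,
      mem_verticesOff, not_exists, not_and] at ha
    obtain ⟨hxa, hap, hoff⟩ := ha
    rw [mem_neighborFinset] at hxa
    exact ⟨_, isReroute_concat (hHG hxa) fun i => by
      by_cases hi : i = z
      · exact hi ▸ hap
      · exact hoff i hi⟩
  · have hrot : (N ∩ p.support.toFinset).card ≤ (p.rotationEnds H).card :=
      (P.isPath z).card_neighborFinset_inter_support_le
    exact exists_extension_of_reroutes hc hP hHG hcol hm hexp hentry
      (A := p.rotationEnds H) (by omega) (fun a => s(x, p.getVert (p.support.idxOf a - 1)))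
      (fun a ha => (exists_isReroute_of_mem_rotationEnds hHG ha).1)
      fun a ha => (exists_isReroute_of_mem_rotationEnds hHG ha).2

end PathForest

end

theorem stmt3_general {V : Type*} [Fintype V] [DecidableEq V]
    (G : SimpleGraph V) (C : Type*) (c : Sym2 V → C)
    (hc : IsProperEdgeColoring G c)
    (b m r : ℕ) (hm : 0 < m) (hr : 0 < r) (hmrb : 2 * m * r ≤ b)
    (P : PathForest G r) (hP : P.IsRainbow c)
    (H : SimpleGraph V) [DecidableRel H.Adj] (hHG : H ≤ G)
    (hcol : ∀ e ∈ H.edgeSet, ∀ i, ∀ f ∈ (P.path i).edges, c e ≠ c f)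
    (hdeg : ∀ v, 3 * b ≤ H.degree v)
    (hexp : ∀ A B : Finset V, Disjoint A B → A.card = b → B.card = b →
      b + 1 ≤ (H.interedges A B).card) :
    ((P.vertexCount : ℤ) - 2 * b ≤ ((P.path ⟨0, hr⟩).support.length : ℤ)) ∨
    ∃ e₁ ∈ H.edgeSet, ∃ e₂ ∈ H.edgeSet, ∃ P' : PathForest G r,
      P'.IsRainbow c ∧
      (∀ i, ∀ f ∈ (P'.path i).edges, (∃ j, f ∈ (P.path j).edges) ∨ f = e₁ ∨ f = e₂) ∧
      (P.path ⟨0, hr⟩).support.length + m ≤ (P'.path ⟨0, hr⟩).support.length := by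
  set z : Fin r := ⟨0, hr⟩
  refine or_iff_not_imp_left.2 fun hshort => ?_
  have hsplit : P.vertexCount = (P.path z).support.length + (P.verticesOff z).card := by
    rw [P.card_verticesOff, PathForest.vertexCount, ← Finset.add_sum_erase _ _ (Finset.mem_univ z)]
  have hmr : m * (r - 1) ≤ b := by
    have := Nat.mul_le_mul_left m (Nat.sub_le r 1)
    nlinarith
  have hcard := P.card_verticesOff_le z hm
  have hsdiff := Finset.card_sdiff_of_subset (P.entryPoints_subset_verticesOff z m)
  obtain ⟨e₁, he₁, e₂, he₂, P', hP', hsub, hlen⟩ := PathForest.exists_extension (z := z)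
    (hc.mono hHG) hP hHG (fun e he ⟨f, ⟨i, hf⟩, hcf⟩ => hcol e he i f hf hcf.symm) hm (hdeg _)
    hexp (by omega) (by omega)
  refine ⟨e₁, he₁, e₂, he₂, P', hP', fun i f hf => hsub ⟨i, hf⟩, ?_⟩
  rw [length_support, length_support]
  omega

/-- Rotation lemma: given a rainbow path forest `P₁,…,P_r` and an expander `H`
colour-disjoint from the forest, either `P₁` already covers almost all of the
forest's vertices, or one can enlarge `P₁` by `m` vertices using two edges of `H`. -/
theorem stmt3 {V : Type*} [Fintype V] [DecidableEq V]
    (G : SimpleGraph V) (C : Type*) (c : Sym2 V → C)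
    (hc : IsProperEdgeColoring G c)
    (b m r : ℕ) (hb : 0 < b) (hm : 0 < m) (hr : 0 < r) (hmrb : 2 * m * r ≤ b)
    (P : PathForest G r) (hP : P.IsRainbow c)
    (H : SimpleGraph V) [DecidableRel H.Adj] (hHG : H ≤ G)
    (hcol : ∀ e ∈ H.edgeSet, ∀ i, ∀ f ∈ (P.path i).edges, c e ≠ c f)
    (hdeg : ∀ v, 3 * b ≤ H.degree v)
    (hexp : ∀ A B : Finset V, Disjoint A B → A.card = b → B.card = b →
      b + 1 ≤ (H.interedges A B).card) :
    ((P.vertexCount : ℤ) - 2 * b ≤ ((P.path ⟨0, hr⟩).support.length : ℤ)) ∨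
    ∃ e₁ ∈ H.edgeSet, ∃ e₂ ∈ H.edgeSet, ∃ P' : PathForest G r,
      P'.IsRainbow c ∧
      (∀ i, ∀ f ∈ (P'.path i).edges, (∃ j, f ∈ (P.path j).edges) ∨ f = e₁ ∨ f = e₂) ∧
      (P.path ⟨0, hr⟩).support.length + m ≤ (P'.path ⟨0, hr⟩).support.length :=
  stmt3_general G C c hc b m r hm hr hmrb P hP H hHG hcol hdeg hexp
end

section
/- Fix a proper edge-colouring of K_n and 0 < p <= 1. Call a pair of disjoint vertex sets A, B with |A| = |B| = y epsilon-nearly-rainbow if the number of distinct colours appearing on edges between A and B is at least (1 - epsilon/2)*y^2. Let G be the random subgraph obtained by including each colour class independently with probability p. If epsilon^2 * y >= 30 * log n / p, then with probability at least 1 - o(1), every epsilon-nearly-rainbow pair A, B with |A| = |B| = y satisfies e_G(A, B) >= (1 - epsilon)*p*y^2. -/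
open scoped Classical in
/-- The probability of the event `E` when each colour in `C` is included in a random
set of colours independently with probability `p`. -/
noncomputable def colorProb {C : Type*} [Fintype C] (p : ℝ) (E : Finset C → Prop) : ℝ :=
  ∑ S : Finset C, if E S then p ^ S.card * (1 - p) ^ (Fintype.card C - S.card) else 0

/-- The number of edges of the random subgraph determined by the colour set `S`
between two (disjoint) vertex sets `A` and `B`. -/
def eG {n : ℕ} {C : Type*} [DecidableEq C] (c : Sym2 (Fin n) → C) (S : Finset C)
    (A B : Finset (Fin n)) : ℕ :=
  ((A ×ˢ B).filter fun ab => ab.1 ≠ ab.2 ∧ c s(ab.1, ab.2) ∈ S).card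

/-- The degree of `v` in the random subgraph determined by the colour set `S`. -/
def degS {n : ℕ} {C : Type*} [DecidableEq C] (c : Sym2 (Fin n) → C) (S : Finset C)
    (v : Fin n) : ℕ :=
  (Finset.univ.filter fun u => u ≠ v ∧ c s(v, u) ∈ S).card

/-- The number of distinct colours on edges between `A` and `B`. -/
def colorsBetween {n : ℕ} {C : Type*} [DecidableEq C] (c : Sym2 (Fin n) → C)
    (A B : Finset (Fin n)) : ℕ :=
  (((A ×ˢ B).filter fun ab => ab.1 ≠ ab.2).image fun ab => c s(ab.1, ab.2)).card

/-!
Every colour of the random colour set `S` that occurs between `A` and `B` contributes an edge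
of `G` there, so `e_G(A, B)` dominates `|S ∩ T|`, where `T` is the set of at least
`(1 - ε/2) y²` colours between `A` and `B`; the colours enter `S` independently. An
exponential moment bound with tilt `ε/2` puts the lower tail of `|S ∩ T|` below
`exp(-p ε² y² / 8)`, which is at most `n^(-15y/4)`, and a union bound over the at most
`n^(2y)` pairs finishes the proof.
-/

open Finset Real

lemma sub_sq_div_two_le_one_sub_exp_neg {s : ℝ} (hs : 0 ≤ s) :
    s - s ^ 2 / 2 ≤ 1 - exp (-s) := by
  have hcubic : 1 + s + s ^ 2 / 2 + s ^ 3 / 6 ≤ exp s := by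
    simpa [sum_range_succ, Nat.factorial] using sum_le_exp_of_nonneg hs 4
  have hinv : exp (-s) * exp s = 1 := by rw [← exp_add, neg_add_cancel, exp_zero]
  nlinarith [exp_pos (-s), pow_nonneg hs 3, pow_nonneg hs 4, pow_nonneg hs 5]

section ColorProb

variable {C : Type*} [Fintype C] {p : ℝ}

noncomputable def colorWeight (p : ℝ) (S : Finset C) : ℝ :=
  p ^ S.card * (1 - p) ^ (Fintype.card C - S.card)

lemma colorWeight_nonneg (hp0 : 0 ≤ p) (hp1 : p ≤ 1) (S : Finset C) :
    0 ≤ colorWeight p S := by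
  have : 0 ≤ 1 - p := by linarith
  unfold colorWeight
  positivity

lemma colorProb_eq_sum_filter (E : Finset C → Prop) [DecidablePred E] :
    colorProb p E = ∑ S with E S, colorWeight p S := by
  rw [colorProb, sum_filter]
  congr! 2

lemma sum_colorWeight_mul_prod (u : C → ℝ) :
    ∑ S : Finset C, colorWeight p S * ∏ i ∈ S, u i = ∏ i, (p * u i + (1 - p)) := by
  classical
  rw [prod_add, ← powerset_univ]
  refine sum_congr rfl fun S _ => ?_
  rw [prod_mul_distrib, prod_const, prod_const, card_univ_sdiff, colorWeight]
  ring

lemma sum_colorWeight : ∑ S : Finset C, colorWeight p S = 1 := by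
  simpa using sum_colorWeight_mul_prod (p := p) (fun _ : C => 1)

lemma colorProb_mono (hp0 : 0 ≤ p) (hp1 : p ≤ 1) {E F : Finset C → Prop}
    (h : ∀ S, E S → F S) : colorProb p E ≤ colorProb p F := by
  classical
  simp only [colorProb_eq_sum_filter]
  exact sum_le_sum_of_subset_of_nonneg (monotone_filter_right _ fun S _ => h S)
    fun S _ _ => colorWeight_nonneg hp0 hp1 S

lemma colorProb_le_one (hp0 : 0 ≤ p) (hp1 : p ≤ 1) (E : Finset C → Prop) :
    colorProb p E ≤ 1 := by
  classical
  calc colorProb p E ≤ colorProb p fun _ => True := colorProb_mono hp0 hp1 fun _ _ => trivial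
    _ = 1 := by rw [colorProb_eq_sum_filter, filter_true, sum_colorWeight]

lemma colorProb_not (E : Finset C → Prop) :
    colorProb p (fun S => ¬ E S) = 1 - colorProb p E := by
  classical
  rw [colorProb_eq_sum_filter, colorProb_eq_sum_filter, ← sum_colorWeight (C := C) (p := p),
    ← sum_filter_add_sum_filter_not univ E]
  ring

lemma colorProb_exists_le_sum {ι : Type*} (hp0 : 0 ≤ p) (hp1 : p ≤ 1) (I : Finset ι)
    (Q : ι → Finset C → Prop) :
    colorProb p (fun S => ∃ i ∈ I, Q i S) ≤ ∑ i ∈ I, colorProb p (Q i) := by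
  classical
  simp only [colorProb_eq_sum_filter]
  have hw := colorWeight_nonneg hp0 hp1 (C := C)
  calc ∑ S with ∃ i ∈ I, Q i S, colorWeight p S
      ≤ ∑ S, ∑ i ∈ I, if Q i S then colorWeight p S else 0 := by
        rw [sum_filter]
        refine sum_le_sum fun S _ => ?_
        split_ifs with hS
        · obtain ⟨i, hi, hQ⟩ := hS
          exact (if_pos hQ).symm.le.trans <| single_le_sum (f := fun i => if Q i S then _ else _)
            (fun j _ => by split_ifs <;> simp [hw]) hi
        · exact sum_nonneg fun j _ => by split_ifs <;> simp [hw]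
    _ = ∑ i ∈ I, ∑ S with Q i S, colorWeight p S := by
        rw [sum_comm]
        simp only [sum_filter]

lemma one_sub_card_mul_le_colorProb_forall {ι : Type*} (hp0 : 0 ≤ p) (hp1 : p ≤ 1)
    (I : Finset ι) (Q : ι → Finset C → Prop) {δ : ℝ}
    (h : ∀ i ∈ I, colorProb p (fun S => ¬ Q i S) ≤ δ) :
    1 - #I * δ ≤ colorProb p (fun S => ∀ i ∈ I, Q i S) := by
  have hfail := (colorProb_exists_le_sum hp0 hp1 I fun i S => ¬ Q i S).trans
    ((sum_le_sum h).trans_eq (by rw [sum_const, nsmul_eq_mul]))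
  have := colorProb_not (p := p) fun S => ∃ i ∈ I, ¬ Q i S
  simp only [not_exists, not_and, not_not] at this
  linarith

lemma colorProb_le_sum_colorWeight_mul (hp0 : 0 ≤ p) (hp1 : p ≤ 1) {E : Finset C → Prop}
    {f : Finset C → ℝ} (hf0 : ∀ S, 0 ≤ f S) (hf1 : ∀ S, E S → 1 ≤ f S) :
    colorProb p E ≤ ∑ S, colorWeight p S * f S := by
  classical
  rw [colorProb_eq_sum_filter, sum_filter]
  refine sum_le_sum fun S _ => ?_
  split_ifs with hS
  · exact le_mul_of_one_le_right (colorWeight_nonneg hp0 hp1 S) (hf1 S hS)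
  · exact mul_nonneg (colorWeight_nonneg hp0 hp1 S) (hf0 S)

lemma sum_colorWeight_mul_exp_card_inter [DecidableEq C] (T : Finset C) (s : ℝ) :
    ∑ S : Finset C, colorWeight p S * exp (-(s * #(S ∩ T)))
      = (1 - p * (1 - exp (-s))) ^ #T := by
  have hprod (S : Finset C) :
      exp (-(s * #(S ∩ T))) = ∏ i ∈ S, if i ∈ T then exp (-s) else 1 := by
    rw [prod_ite_mem, prod_const, ← exp_nat_mul]
    ring_nf
  simp_rw [hprod, sum_colorWeight_mul_prod]
  calc ∏ i, (p * (if i ∈ T then exp (-s) else 1) + (1 - p))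
      = ∏ i, if i ∈ T then 1 - p * (1 - exp (-s)) else 1 :=
        prod_congr rfl fun i _ => by split_ifs <;> ring
    _ = (1 - p * (1 - exp (-s))) ^ #T := by rw [prod_ite_mem, univ_inter, prod_const]

lemma colorProb_card_inter_lt_le [DecidableEq C] (hp0 : 0 ≤ p) (hp1 : p ≤ 1) (T : Finset C)
    (a : ℝ) {s : ℝ} (hs : 0 ≤ s) :
    colorProb p (fun S => (#(S ∩ T) : ℝ) < a) ≤ exp (s * a - p * #T * (1 - exp (-s))) := by
  have hmarkov := colorProb_le_sum_colorWeight_mul hp0 hp1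
    (E := fun S => (#(S ∩ T) : ℝ) < a) (f := fun S => exp (s * a) * exp (-(s * #(S ∩ T))))
    (fun S => by positivity) fun S hS => by
      rw [← exp_add, one_le_exp_iff]
      nlinarith
  have hbase : 1 - p * (1 - exp (-s)) ≤ exp (-(p * (1 - exp (-s)))) := by
    linarith [add_one_le_exp (-(p * (1 - exp (-s))))]
  have hbase0 : 0 ≤ 1 - p * (1 - exp (-s)) := by nlinarith [exp_pos (-s)]
  calc colorProb p (fun S => (#(S ∩ T) : ℝ) < a)
      ≤ exp (s * a) * (1 - p * (1 - exp (-s))) ^ #T := by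
        simpa only [mul_left_comm _ (exp (s * a)), ← mul_sum,
          sum_colorWeight_mul_exp_card_inter] using hmarkov
    _ ≤ exp (s * a) * exp (-(p * (1 - exp (-s)))) ^ #T := by gcongr
    _ = exp (s * a - p * #T * (1 - exp (-s))) := by
        rw [← exp_nat_mul, ← exp_add]
        ring_nf

end ColorProb

section RandomSubgraph

variable {n : ℕ} {C : Type*} [DecidableEq C]

def colorSetBetween (c : Sym2 (Fin n) → C) (A B : Finset (Fin n)) : Finset C :=
  ((A ×ˢ B).filter fun ab => ab.1 ≠ ab.2).image fun ab => c s(ab.1, ab.2)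

lemma card_inter_colorSetBetween_le_eG (c : Sym2 (Fin n) → C) (S : Finset C)
    (A B : Finset (Fin n)) : #(S ∩ colorSetBetween c A B) ≤ eG c S A B := by
  rw [inter_comm, ← filter_mem_eq_inter, colorSetBetween, filter_image, filter_filter]
  exact card_image_le

variable [Fintype C] {p ε : ℝ}

lemma colorProb_eG_lt_le (c : Sym2 (Fin n) → C) (hp0 : 0 ≤ p) (hp1 : p ≤ 1) (hε : 0 < ε)
    {y : ℕ} (A B : Finset (Fin n)) (hAB : (1 - ε / 2) * (y : ℝ) ^ 2 ≤ colorsBetween c A B) :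
    colorProb p (fun S => (eG c S A B : ℝ) < (1 - ε) * p * y ^ 2)
      ≤ exp (-(p * ε ^ 2 * y ^ 2 / 8)) := by
  rcases le_or_gt 1 ε with hε1 | hε1
  · have hempty (S : Finset C) : ¬ (eG c S A B : ℝ) < (1 - ε) * p * y ^ 2 := by
      have : (1 - ε) * p * (y : ℝ) ^ 2 ≤ 0 :=
        mul_nonpos_of_nonpos_of_nonneg
          (mul_nonpos_of_nonpos_of_nonneg (by linarith) hp0) (sq_nonneg _)
      exact not_lt.2 (this.trans (Nat.cast_nonneg _))
    simp [colorProb, hempty, (exp_pos _).le]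
  set T := colorSetBetween c A B
  have hT : (1 - ε / 2) * (y : ℝ) ^ 2 ≤ #T := hAB
  refine (colorProb_mono hp0 hp1 fun S hS => (Nat.cast_le.2
    (card_inter_colorSetBetween_le_eG c S A B)).trans_lt hS).trans
    ((colorProb_card_inter_lt_le hp0 hp1 T _ (s := ε / 2) (by positivity)).trans
      (exp_le_exp.2 ?_))
  have htilt := sub_sq_div_two_le_one_sub_exp_neg (s := ε / 2) (by positivity)
  have hpT : p * ((1 - ε / 2) * y ^ 2) * (ε / 2 - (ε / 2) ^ 2 / 2)
      ≤ p * #T * (1 - exp (-(ε / 2))) :=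
    mul_le_mul (mul_le_mul_of_nonneg_left hT hp0) htilt (by nlinarith) (by positivity)
  nlinarith [mul_nonneg (mul_nonneg hp0 (sq_nonneg (y : ℝ))) (pow_nonneg hε.le 3)]

lemma one_sub_inv_le_colorProb_nearlyRainbow (c : Sym2 (Fin n) → C) (hn : 1 < n)
    (hp0 : 0 < p) (hp1 : p ≤ 1) (hε : 0 < ε) {y : ℕ}
    (hεy : 30 * log n / p ≤ ε ^ 2 * y) :
    1 - (n : ℝ)⁻¹ ≤ colorProb p (fun S =>
      ∀ A B : Finset (Fin n), Disjoint A B → #A = y → #B = y →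
        (1 - ε / 2) * (y : ℝ) ^ 2 ≤ colorsBetween c A B →
        (1 - ε) * p * (y : ℝ) ^ 2 ≤ eG c S A B) := by
  have hlog : 0 < log n := log_pos (by exact_mod_cast hn)
  have h30 : 30 * log n ≤ p * ε ^ 2 * y := by
    rw [div_le_iff₀ hp0] at hεy
    linarith
  have hy : (1 : ℝ) ≤ y := by
    rcases Nat.eq_zero_or_pos y with h0 | h0
    · simp only [h0, CharP.cast_eq_zero, mul_zero] at h30
      linarith
    · exact_mod_cast h0
  set I := (powersetCard y univ ×ˢ powersetCard y univ).filter
    fun AB : Finset (Fin n) × Finset (Fin n) =>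
      (1 - ε / 2) * (y : ℝ) ^ 2 ≤ colorsBetween c AB.1 AB.2
  have hpower : (n : ℝ) ^ y = exp (y * log n) := by
    rw [← exp_log (by positivity : (0 : ℝ) < n), ← exp_nat_mul, log_exp]
  -- each of the at most `n^(2y)` pairs fails with probability at most `n^(-15y/4) ≤ n^(-3y)`
  have hunion : (#I : ℝ) * exp (-(3 * y * log n)) ≤ (n : ℝ)⁻¹ := by
    have hI : #I ≤ n ^ y * n ^ y := by
      refine (card_filter_le _ _).trans ?_
      rw [card_product, card_powersetCard, card_univ, Fintype.card_fin]
      exact Nat.mul_le_mul (Nat.choose_le_pow n y) (Nat.choose_le_pow n y)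
    calc (#I : ℝ) * exp (-(3 * y * log n))
        ≤ (n : ℝ) ^ y * (n : ℝ) ^ y * exp (-(3 * y * log n)) := by
          gcongr; exact_mod_cast hI
      _ = exp (-(y * log n)) := by rw [hpower, ← exp_add, ← exp_add]; ring_nf
      _ ≤ exp (-log n) := exp_le_exp.2 (by nlinarith)
      _ = (n : ℝ)⁻¹ := by rw [exp_neg, exp_log (by positivity)]
  have hpair : ∀ AB ∈ I,
      colorProb p (fun S => ¬ (1 - ε) * p * (y : ℝ) ^ 2 ≤ eG c S AB.1 AB.2)
        ≤ exp (-(3 * y * log n)) := fun AB hAB => by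
    simp only [not_le]
    refine (colorProb_eG_lt_le c hp0.le hp1 hε AB.1 AB.2 (mem_filter.1 hAB).2).trans
      (exp_le_exp.2 ?_)
    nlinarith
  calc 1 - (n : ℝ)⁻¹ ≤ 1 - #I * exp (-(3 * y * log n)) := by linarith
    _ ≤ colorProb p (fun S => ∀ AB ∈ I, (1 - ε) * p * (y : ℝ) ^ 2 ≤ eG c S AB.1 AB.2) :=
        one_sub_card_mul_le_colorProb_forall hp0.le hp1 I _ hpair
    _ ≤ _ := colorProb_mono hp0.le hp1 fun S hS A B _ hA hB hAB =>
        hS (A, B) (by simp [I, hA, hB, hAB])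

end RandomSubgraph

open Filter in
theorem stmt5_general (p ε : ℕ → ℝ) (y : ℕ → ℕ)
    (hp : ∀ n, 0 < p n ∧ p n ≤ 1) (hε : ∀ n, 0 < ε n)
    (C : ℕ → Type) [∀ n, Fintype (C n)] [∀ n, DecidableEq (C n)]
    (c : ∀ n, Sym2 (Fin n) → C n)
    (hεy : ∀ n : ℕ, 30 * Real.log n / p n ≤ (ε n) ^ 2 * (y n : ℝ)) :
    Tendsto (fun n : ℕ => colorProb (p n) (fun S =>
      ∀ A B : Finset (Fin n), Disjoint A B → A.card = y n → B.card = y n →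
        (1 - ε n / 2) * (y n : ℝ) ^ 2 ≤ (colorsBetween (c n) A B : ℝ) →
        (1 - ε n) * p n * (y n : ℝ) ^ 2 ≤ (eG (c n) S A B : ℝ)))
      atTop (nhds 1) := by
  have hlower : Tendsto (fun n : ℕ => 1 - (n : ℝ)⁻¹) atTop (nhds 1) := by
    simpa using tendsto_const_nhds.sub (tendsto_inv_atTop_nhds_zero_nat (𝕜 := ℝ))
  refine tendsto_of_tendsto_of_tendsto_of_le_of_le' hlower tendsto_const_nhds ?_
    (Eventually.of_forall fun n => colorProb_le_one (hp n).1.le (hp n).2 _)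
  filter_upwards [eventually_gt_atTop 1] with n hn
  exact one_sub_inv_le_colorProb_nearlyRainbow (c n) hn (hp n).1 (hp n).2 (hε n) (hεy n)

open Filter in
/-- If `ε² y ≥ 30 log n / p`, then with probability `1 - o(1)` every
`ε`-nearly-rainbow pair `A, B` with `|A| = |B| = y` spans at least `(1-ε)py²`
edges of the random subgraph `G` obtained by keeping each colour class
independently with probability `p`. -/
theorem stmt5 (p ε : ℕ → ℝ) (y : ℕ → ℕ)
    (hp : ∀ n, 0 < p n ∧ p n ≤ 1) (hε : ∀ n, 0 < ε n)
    (C : ℕ → Type) [∀ n, Fintype (C n)] [∀ n, DecidableEq (C n)]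
    (c : ∀ n, Sym2 (Fin n) → C n)
    (hc : ∀ n, IsProperEdgeColoring (⊤ : SimpleGraph (Fin n)) (c n))
    (hεy : ∀ n : ℕ, 30 * Real.log n / p n ≤ (ε n) ^ 2 * (y n : ℝ)) :
    Tendsto (fun n : ℕ => colorProb (p n) (fun S =>
      ∀ A B : Finset (Fin n), Disjoint A B → A.card = y n → B.card = y n →
        (1 - ε n / 2) * (y n : ℝ) ^ 2 ≤ (colorsBetween (c n) A B : ℝ) →
        (1 - ε n) * p n * (y n : ℝ) ^ 2 ≤ (eG (c n) S A B : ℝ)))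
      atTop (nhds 1) :=
  stmt5_general p ε y hp hε C c hεy
end

section
/- Let A, B be disjoint vertex sets of size x in a properly edge-coloured K_n, and let S ⊆ A, T ⊆ B be uniformly random subsets of size y each, chosen independently. Then the expected number of distinct colours appearing on edges between S and T is at least (1 - (y-1)^2/(x-1)) * y^2. -/
open Finset

section Collisions

variable {α β : Type*} [DecidableEq β]

def collisionPairs (f : α → β) (P : Finset α) : Finset (α × α) :=
  P.offDiag.filter fun pq => f pq.1 = f pq.2

lemma collisionPairs_filter_fiber (f : α → β) (P : Finset α) (d : β) :
    (collisionPairs f P).filter (fun pq => f pq.1 = d) = (P.filter (f · = d)).offDiag := by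
  ext ⟨p, q⟩
  simp only [collisionPairs, mem_filter, mem_offDiag]
  grind

/-- A fibre of size `m ≥ 1` contributes one point to the image and `m(m-1) ≥ m - 1` collisions. -/
lemma card_le_card_image_add_card_collisionPairs (f : α → β) (P : Finset α) :
    #P ≤ #(P.image f) + #(collisionPairs f P) := by
  have hmaps : (collisionPairs f P : Set (α × α)).MapsTo (fun pq => f pq.1) (P.image f) :=
    fun pq hpq => mem_image_of_mem f (mem_offDiag.1 (mem_filter.1 hpq).1).1
  rw [card_eq_sum_card_image f P, card_eq_sum_card_fiberwise hmaps, card_eq_sum_ones (P.image f),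
    ← sum_add_distrib]
  refine sum_le_sum fun d hd => ?_
  rw [collisionPairs_filter_fiber, offDiag_card]
  have hm : 0 < #(P.filter (f · = d)) := by
    obtain ⟨p, hp, rfl⟩ := mem_image.1 hd
    exact card_pos.2 ⟨p, mem_filter.2 ⟨hp, rfl⟩⟩
  obtain ⟨m, hcard⟩ := Nat.exists_eq_add_one_of_ne_zero hm.ne'
  rw [hcard, Nat.succ_mul_succ]
  omega

lemma collisionPairs_of_subset [DecidableEq α] (f : α → β) {P Q : Finset α} (hQP : Q ⊆ P) :
    collisionPairs f Q = (collisionPairs f P).filter fun pq => pq.1 ∈ Q ∧ pq.2 ∈ Q := by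
  ext ⟨p, q⟩
  simp only [collisionPairs, mem_filter, mem_offDiag]
  constructor
  · rintro ⟨⟨hp, hq, hpq⟩, hf⟩
    exact ⟨⟨⟨hQP hp, hQP hq, hpq⟩, hf⟩, hp, hq⟩
  · rintro ⟨⟨⟨-, -, hpq⟩, hf⟩, hp, hq⟩
    exact ⟨⟨hp, hq, hpq⟩, hf⟩

end Collisions

lemma sum_sum_card_filter_and {ι κ γ : Type*} (s : Finset ι) (t : Finset κ) (K : Finset γ)
    (p : ι → γ → Prop) (q : κ → γ → Prop) [∀ i k, Decidable (p i k)] [∀ j k, Decidable (q j k)] :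
    ∑ i ∈ s, ∑ j ∈ t, #(K.filter fun k => p i k ∧ q j k) =
      ∑ k ∈ K, #(s.filter (p · k)) * #(t.filter (q · k)) := by
  simp only [card_filter, sum_mul_sum, ite_zero_mul_ite_zero, mul_one]
  conv_rhs => rw [sum_comm]
  refine sum_congr rfl fun i _ => ?_
  exact sum_comm

lemma card_filter_powersetCard_mem_mem_mul {α : Type*} [DecidableEq α] {s : Finset α} {a b : α}
    (ha : a ∈ s) (hb : b ∈ s) (hab : a ≠ b) (k : ℕ) :
    #((s.powersetCard k).filter fun S => a ∈ S ∧ b ∈ S) * (#s).choose 2 =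
      (#s).choose k * k.choose 2 := by
  have hpair : #({a, b} : Finset α) = 2 := card_pair hab
  obtain hk | hk := lt_or_ge k 2
  · rw [Nat.choose_eq_zero_of_lt hk, mul_zero, mul_eq_zero]
    left
    refine card_eq_zero.2 (filter_eq_empty_iff.2 fun S hS ⟨haS, hbS⟩ => ?_)
    have := (mem_powersetCard.1 hS).2 ▸ one_lt_card.2 ⟨a, haS, b, hbS, hab⟩
    omega
  · have hsub : ({a, b} : Finset α) ⊆ s := insert_subset ha (singleton_subset_iff.2 hb)
    have := card_filter_powersetCard_subset {a, b} s k hsub (hpair ▸ hk)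
    simp only [insert_subset_iff, singleton_subset_iff, hpair] at this
    rw [this, Nat.choose_mul hk, mul_comm]

lemma sum_sum_card_collisionPairs {V β : Type*} [DecidableEq V] [DecidableEq β] (f : V × V → β)
    (A B : Finset V) (k l : ℕ) :
    ∑ S ∈ A.powersetCard k, ∑ T ∈ B.powersetCard l, #(collisionPairs f (S ×ˢ T)) =
      ∑ pq ∈ collisionPairs f (A ×ˢ B),
        #((A.powersetCard k).filter fun S => pq.1.1 ∈ S ∧ pq.2.1 ∈ S) *
          #((B.powersetCard l).filter fun T => pq.1.2 ∈ T ∧ pq.2.2 ∈ T) := by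
  rw [← sum_sum_card_filter_and]
  refine sum_congr rfl fun S hS => sum_congr rfl fun T hT => ?_
  rw [collisionPairs_of_subset f
    (product_subset_product (mem_powersetCard.1 hS).1 (mem_powersetCard.1 hT).1)]
  congr 1
  refine filter_congr fun pq _ => ?_
  simp only [mem_product]
  tauto

section EdgeColoring

variable {V C : Type*} {c : Sym2 V → C}

def edgeColor (c : Sym2 V → C) (e : V × V) : C := c s(e.1, e.2)

namespace IsProperEdgeColoring

lemma apply_ne_of_ne (hc : IsProperEdgeColoring (⊤ : SimpleGraph V) c) {u v w : V}
    (huv : u ≠ v) (huw : u ≠ w) (hvw : v ≠ w) : c s(u, v) ≠ c s(u, w) :=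
  hc _ (by simpa using huv) _ (by simpa using huw) (by simp [hvw, huw])
    ⟨u, Sym2.mem_mk_left u v, Sym2.mem_mk_left u w⟩

variable [DecidableEq C] {A B : Finset V}

lemma ne_and_ne_of_mem_collisionPairs (hc : IsProperEdgeColoring (⊤ : SimpleGraph V) c)
    (hAB : Disjoint A B) {p q : V × V} (hpq : (p, q) ∈ collisionPairs (edgeColor c) (A ×ˢ B)) :
    p.1 ≠ q.1 ∧ p.2 ≠ q.2 := by
  obtain ⟨⟨⟨hpA, hpB⟩, ⟨hqA, hqB⟩, hne⟩, hcol⟩ := by simpa [collisionPairs] using hpq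
  have hAB' : ∀ {a b}, a ∈ A → b ∈ B → a ≠ b := fun ha hb hab => disjoint_left.1 hAB ha (hab ▸ hb)
  constructor
  · intro h1
    refine hc.apply_ne_of_ne (hAB' hpA hpB) (hAB' hpA hqB) (fun h2 => hne (Prod.ext h1 h2)) ?_
    simpa [edgeColor, h1] using hcol
  · intro h2
    refine hc.apply_ne_of_ne (hAB' hpA hpB).symm (hAB' hqA hpB).symm
      (fun h1 => hne (Prod.ext h1 h2)) ?_
    simpa [edgeColor, h2, Sym2.eq_swap] using hcol

lemma card_collisionPairs_le [DecidableEq V] (hc : IsProperEdgeColoring (⊤ : SimpleGraph V) c)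
    (hAB : Disjoint A B) : #(collisionPairs (edgeColor c) (A ×ˢ B)) ≤ #A * #B * (#A - 1) := by
  set K := collisionPairs (edgeColor c) (A ×ˢ B)
  have hmaps : (K : Set ((V × V) × (V × V))).MapsTo Prod.fst ↑(A ×ˢ B) :=
    fun pq hpq => (mem_offDiag.1 (mem_filter.1 hpq).1).1
  rw [card_eq_sum_card_fiberwise hmaps, ← card_product, ← smul_eq_mul, ← sum_const]
  refine sum_le_sum fun p hp => ?_
  rw [← card_erase_of_mem (mem_product.1 hp).1]
  refine card_le_card_of_injOn (fun pq => pq.2.1) (fun pq hpq => ?_) (fun pq hpq pq' hpq' h => ?_)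
  · obtain ⟨hK, rfl⟩ := mem_filter.1 hpq
    exact mem_erase.2 ⟨(hc.ne_and_ne_of_mem_collisionPairs hAB hK).1.symm,
      (mem_product.1 (mem_offDiag.1 (mem_filter.1 hK).1).2.1).1⟩
  · obtain ⟨hK, rfl⟩ := mem_filter.1 hpq
    obtain ⟨hK', hp'⟩ := mem_filter.1 hpq'
    obtain ⟨hoff, hcol⟩ := mem_filter.1 hK
    obtain ⟨hoff', hcol'⟩ := mem_filter.1 hK'
    obtain ⟨-, hq, -⟩ := mem_offDiag.1 hoff
    obtain ⟨-, hq', -⟩ := mem_offDiag.1 hoff'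
    refine Prod.ext hp'.symm (by_contra fun hne => ?_)
    have hqq' : (pq.2, pq'.2) ∈ K :=
      mem_filter.2 ⟨mem_offDiag.2 ⟨hq, hq', hne⟩, hcol.symm.trans (hp' ▸ hcol')⟩
    exact (hc.ne_and_ne_of_mem_collisionPairs hAB hqq').1 h

lemma sum_sum_card_collisionPairs_eq [DecidableEq V]
    (hc : IsProperEdgeColoring (⊤ : SimpleGraph V) c) (hAB : Disjoint A B) {x : ℕ} (hA : #A = x)
    (hB : #B = x) (k : ℕ) :
    ∑ S ∈ A.powersetCard k, ∑ T ∈ B.powersetCard k,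
        (#(collisionPairs (edgeColor c) (S ×ˢ T)) : ℝ) =
      #(collisionPairs (edgeColor c) (A ×ˢ B)) *
        ((x.choose k * k.choose 2 / x.choose 2 : ℝ)) ^ 2 := by
  have hpair : ∀ {s : Finset V} {a b : V}, #s = x → a ∈ s → b ∈ s → a ≠ b →
      (#((s.powersetCard k).filter fun S => a ∈ S ∧ b ∈ S) : ℝ) =
        x.choose k * k.choose 2 / x.choose 2 := by
    intro s a b hs ha hb hab
    have hx : 1 < x := hs ▸ one_lt_card.2 ⟨a, ha, b, hb, hab⟩
    rw [eq_div_iff (Nat.cast_ne_zero.2 (Nat.choose_pos hx).ne'), ← hs]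
    exact_mod_cast card_filter_powersetCard_mem_mem_mul ha hb hab k
  have hsum := congrArg (Nat.cast : ℕ → ℝ) (sum_sum_card_collisionPairs (edgeColor c) A B k k)
  push_cast at hsum
  rw [hsum, ← nsmul_eq_mul, ← sum_const, sq]
  refine sum_congr rfl fun ⟨p, q⟩ hpq => ?_
  obtain ⟨h1, h2⟩ := hc.ne_and_ne_of_mem_collisionPairs hAB hpq
  obtain ⟨⟨hpA, hpB⟩, ⟨hqA, hqB⟩, -⟩ := by simpa using (mem_filter.1 hpq).1
  rw [hpair hA hpA hqA h1, hpair hB hpB hqB h2]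

lemma sum_sum_card_collisionPairs_le [DecidableEq V]
    (hc : IsProperEdgeColoring (⊤ : SimpleGraph V) c) (hAB : Disjoint A B) {x : ℕ} (hA : #A = x)
    (hB : #B = x) (hx : 1 ≤ x) (k : ℕ) :
    ∑ S ∈ A.powersetCard k, ∑ T ∈ B.powersetCard k,
        (#(collisionPairs (edgeColor c) (S ×ˢ T)) : ℝ) ≤
      (x.choose k : ℝ) ^ 2 * (((k : ℝ) - 1) ^ 2 / ((x : ℝ) - 1)) * (k : ℝ) ^ 2 := by
  have hK : (#(collisionPairs (edgeColor c) (A ×ˢ B)) : ℝ) ≤ (x : ℝ) ^ 2 * ((x : ℝ) - 1) := by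
    have := hc.card_collisionPairs_le hAB
    rw [hA, hB] at this
    rw [sq, ← Nat.cast_pred hx]
    exact_mod_cast this
  rw [hc.sum_sum_card_collisionPairs_eq hAB hA hB k]
  calc _ ≤ (x : ℝ) ^ 2 * ((x : ℝ) - 1) * ((x.choose k * k.choose 2 / x.choose 2 : ℝ)) ^ 2 := by
        gcongr
    _ = _ := by
        rw [Nat.cast_choose_two, Nat.cast_choose_two]
        obtain rfl | hx := hx.eq_or_lt
        -- for `x = 1` both sides are `0`, being divided by `x.choose 2 = 0` and `x - 1 = 0`
        · simp
        · have : (1 : ℝ) < x := by exact_mod_cast hx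
          field_simp

end IsProperEdgeColoring

end EdgeColoring

section CompleteGraph

variable {n : ℕ} {C : Type*} [DecidableEq C]

lemma colorsBetween_eq_card_image (c : Sym2 (Fin n) → C) {S T : Finset (Fin n)}
    (hST : Disjoint S T) : colorsBetween c S T = #((S ×ˢ T).image (edgeColor c)) := by
  have hne : ∀ p ∈ S ×ˢ T, p.1 ≠ p.2 := fun p hp h =>
    disjoint_left.1 hST (mem_product.1 hp).1 (h ▸ (mem_product.1 hp).2)
  rw [colorsBetween, filter_true_of_mem hne]
  rfl

lemma card_mul_card_le_colorsBetween_add (c : Sym2 (Fin n) → C) {S T : Finset (Fin n)}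
    (hST : Disjoint S T) :
    #S * #T ≤ colorsBetween c S T + #(collisionPairs (edgeColor c) (S ×ˢ T)) := by
  rw [colorsBetween_eq_card_image c hST, ← card_product]
  exact card_le_card_image_add_card_collisionPairs _ _

end CompleteGraph

/-- For disjoint `x`-sets `A`, `B` in a properly coloured `K_n` and independent
uniformly random `y`-subsets `S ⊆ A`, `T ⊆ B`, the expected number of distinct
colours between `S` and `T` is at least `(1 - (y-1)²/(x-1)) y²`. -/
theorem stmt7 (n x y : ℕ) (hy : 0 < y) (hyx : y ≤ x)
    (C : Type*) [DecidableEq C] (c : Sym2 (Fin n) → C)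
    (hc : IsProperEdgeColoring (⊤ : SimpleGraph (Fin n)) c)
    (A B : Finset (Fin n)) (hAB : Disjoint A B) (hA : A.card = x) (hB : B.card = x) :
    (1 - ((y : ℝ) - 1) ^ 2 / ((x : ℝ) - 1)) * (y : ℝ) ^ 2 ≤
      (∑ S ∈ A.powersetCard y, ∑ T ∈ B.powersetCard y, (colorsBetween c S T : ℝ)) /
        ((x.choose y : ℝ) ^ 2) := by
  have hN : (0 : ℝ) < x.choose y := by exact_mod_cast Nat.choose_pos hyx
  have hpoint : ∀ S ∈ A.powersetCard y, ∀ T ∈ B.powersetCard y,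
      (y : ℝ) ^ 2 ≤ colorsBetween c S T + #(collisionPairs (edgeColor c) (S ×ˢ T)) := by
    intro S hS T hT
    obtain ⟨hSA, hS⟩ := mem_powersetCard.1 hS
    obtain ⟨hTB, hT⟩ := mem_powersetCard.1 hT
    have := card_mul_card_le_colorsBetween_add c (hAB.mono hSA hTB)
    rw [hS, hT, ← sq] at this
    exact_mod_cast this
  have hsum := sum_le_sum fun S hS => sum_le_sum fun T hT => hpoint S hS T hT
  simp only [sum_const, card_powersetCard, hA, hB, nsmul_eq_mul, sum_add_distrib] at hsum
  have hcoll := hc.sum_sum_card_collisionPairs_le hAB hA hB (hy.trans_le hyx) y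
  rw [le_div_iff₀ (by positivity)]
  linear_combination hsum + hcoll
end

section
/- Let G be a properly edge-coloured graph, P a rainbow path with at least 2b + 1 vertices, S the set of the first b vertices of P, T the set of the last b vertices of P, and H a subgraph of G vertex-compatible with G such that no colour of H appears on P and there are at least b + 1 edges of H between S and T. Then some edge e of H between S and T, together with the subpath of P between the endpoints of e, forms a rainbow cycle of length at least |P| - 2b + 1, where |P| is the number of edges of P. -/
/-!
Take any edge `st` of `H` with `s` among the first `b` and `t` among the last `b` vertices
of `P`. Since `|P| ≥ 2b + 1`, the vertex `s` precedes `t` on `P`, and the subpath from `s`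
to `t` misses fewer than `b` edges at each end of `P`. It is rainbow as a piece of `P`, and
`st` has a colour not on `P`, so closing it up with `st` gives the required rainbow cycle.
-/

theorem List.Nodup.length_sub_le_idxOf_of_mem_reverse_take {α : Type*} [DecidableEq α]
    {l : List α} (hl : l.Nodup) {x : α} {b : ℕ} (hx : x ∈ l.reverse.take b) :
    l.length - b ≤ l.idxOf x := by
  rw [List.take_reverse, List.mem_reverse] at hx
  by_contra! hlt
  have hxl : x ∈ l := List.mem_of_mem_drop hx
  exact List.disjoint_take_drop hl le_rfl ((List.mem_take_iff_idxOf_lt hxl).2 hlt) hx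

namespace SimpleGraph.Walk

variable {V C : Type*} {G : SimpleGraph V} {u v s t : V}

def IsRainbow (c : Sym2 V → C) (p : G.Walk u v) : Prop :=
  (p.edges.map c).Nodup

lemma IsRainbow.of_isSubwalk {c : Sym2 V → C} {p : G.Walk u v} {q : G.Walk s t}
    (hp : p.IsRainbow c) (hqp : q.IsSubwalk p) : q.IsRainbow c :=
  List.Nodup.sublist (hqp.edges_isInfix.sublist.map c) hp

lemma IsRainbow.cons {c : Sym2 V → C} {q : G.Walk s t} (hq : q.IsRainbow c) (h : G.Adj u s)
    (hc : c s(u, s) ∉ q.edges.map c) : (cons h q).IsRainbow c := by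
  simpa only [IsRainbow, edges_cons, List.map_cons, List.nodup_cons] using ⟨hc, hq⟩

lemma IsPath.isCycle_cons_of_notMem_map_edges {c : Sym2 V → C} {q : G.Walk s t}
    (hq : q.IsPath) (h : G.Adj t s) (hc : c s(t, s) ∉ q.edges.map c) : (cons h q).IsCycle :=
  (cons_isCycle_iff q h).2 ⟨hq, fun he ↦ hc (List.mem_map_of_mem he)⟩

variable [DecidableEq V] {b : ℕ}

lemma length_takeUntil_lt_iff_mem_take (p : G.Walk u v) (h : s ∈ p.support) :
    (p.takeUntil s h).length < b ↔ s ∈ p.support.take b := by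
  rw [length_takeUntil, List.mem_take_iff_idxOf_lt h]

lemma IsPath.length_dropUntil_lt_of_mem_reverse_take {p : G.Walk u v} (hp : p.IsPath)
    (h : t ∈ p.support) (ht : t ∈ p.support.reverse.take b) : (p.dropUntil t h).length < b := by
  have hb : b ≠ 0 := by rintro rfl; simp at ht
  have hidx := hp.support_nodup.length_sub_le_idxOf_of_mem_reverse_take ht
  rw [length_support] at hidx
  rw [length_dropUntil]
  omega

lemma mem_support_takeUntil_of_idxOf_le (p : G.Walk u v) (ht : t ∈ p.support)
    (hst : p.support.idxOf s ≤ p.support.idxOf t) : s ∈ (p.takeUntil t ht).support := by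
  rw [(p.support_takeUntil_prefix_support ht).mem_iff_idxOf_lt_length, length_support,
    length_takeUntil]
  omega

lemma IsPath.exists_isSubwalk_of_mem_take_of_mem_reverse_take {p : G.Walk u v}
    (hp : p.IsPath) (hs : s ∈ p.support.take b) (ht : t ∈ p.support.reverse.take b)
    (hlong : 2 * b ≤ p.support.length) :
    ∃ q : G.Walk s t, q.IsSubwalk p ∧ p.length + 2 ≤ q.length + 2 * b := by
  have hs' : s ∈ p.support := List.mem_of_mem_take hs
  have ht' : t ∈ p.support := List.mem_reverse.1 (List.mem_of_mem_take ht)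
  have hsT : s ∈ (p.takeUntil t ht').support := by
    refine p.mem_support_takeUntil_of_idxOf_le ht' ?_
    have := (List.mem_take_iff_idxOf_lt hs').1 hs
    have := hp.support_nodup.length_sub_le_idxOf_of_mem_reverse_take ht
    omega
  refine ⟨(p.takeUntil t ht').dropUntil s hsT,
    (isSubwalk_dropUntil _ _).trans (isSubwalk_takeUntil _ _), ?_⟩
  have hsplit_t := congrArg length (p.take_spec ht')
  have hsplit_s := congrArg length ((p.takeUntil t ht').take_spec hsT)
  rw [length_append] at hsplit_t hsplit_s
  rw [takeUntil_takeUntil] at hsplit_s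
  have := (p.length_takeUntil_lt_iff_mem_take hs').2 hs
  have := hp.length_dropUntil_lt_of_mem_reverse_take ht' ht
  omega

end SimpleGraph.Walk

open SimpleGraph Walk in
theorem stmt15_general {V : Type*} [DecidableEq V]
    (G : SimpleGraph V) (C : Type*) (c : Sym2 V → C)
    (b : ℕ)
    (u v : V) (p : G.Walk u v) (hp : p.IsPath) (hrb : (p.edges.map c).Nodup)
    (hlong : 2 * b + 1 ≤ p.support.length)
    (H : SimpleGraph V) [DecidableRel H.Adj] (hHG : H ≤ G)
    (hcol : ∀ e ∈ H.edgeSet, ∀ f ∈ p.edges, c e ≠ c f)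
    (hST : b + 1 ≤
      (H.interedges (p.support.take b).toFinset (p.support.reverse.take b).toFinset).card) :
    ∃ s t : V, H.Adj s t ∧ s ∈ (p.support.take b).toFinset ∧
      t ∈ (p.support.reverse.take b).toFinset ∧
      ∃ q : G.Walk t t, q.IsCycle ∧ (q.edges.map c).Nodup ∧
        s(s, t) ∈ q.edges ∧ q.edges ⊆ s(s, t) :: p.edges ∧
        (p.length : ℤ) - 2 * b + 1 ≤ (q.length : ℤ) := by
  obtain ⟨⟨s, t⟩, hst⟩ := Finset.card_pos.1 (Nat.zero_lt_of_lt hST)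
  obtain ⟨hsS, htT, hadj⟩ := H.mem_interedges_iff.1 hst
  rw [List.mem_toFinset] at hsS htT
  obtain ⟨q, hqp, hlen⟩ := hp.exists_isSubwalk_of_mem_take_of_mem_reverse_take hsS htT (by omega)
  have hnew : c s(t, s) ∉ q.edges.map c := by
    rw [Sym2.eq_swap, List.mem_map]
    rintro ⟨f, hf, hfc⟩
    exact hcol _ hadj f (hqp.edges_subset hf) hfc.symm
  have hts : G.Adj t s := (hHG hadj).symm
  refine ⟨s, t, hadj, List.mem_toFinset.2 hsS, List.mem_toFinset.2 htT, cons hts q,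
    (isPath_of_isSubwalk hqp hp).isCycle_cons_of_notMem_map_edges hts hnew,
    (IsRainbow.of_isSubwalk hrb hqp).cons hts hnew, ?_, ?_, ?_⟩
  · simp [Sym2.eq_swap]
  · rw [edges_cons, Sym2.eq_swap]
    exact List.cons_subset_cons _ hqp.edges_subset
  · rw [length_cons]
    omega

/-- Closing a long rainbow path into a long rainbow cycle: if `P` is a rainbow path
with at least `2b+1` vertices, `S` and `T` are the sets of its first and last `b`
vertices, and `H` is a subgraph of `G` with no colour on `P` and at least `b+1`
edges between `S` and `T`, then some edge of `H` between `S` and `T` together with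
the corresponding subpath of `P` forms a rainbow cycle of length at least
`|P| - 2b + 1`. -/
theorem stmt15 {V : Type*} [Fintype V] [DecidableEq V]
    (G : SimpleGraph V) (C : Type*) (c : Sym2 V → C)
    (hc : IsProperEdgeColoring G c)
    (b : ℕ) (hb : 0 < b)
    (u v : V) (p : G.Walk u v) (hp : p.IsPath) (hrb : (p.edges.map c).Nodup)
    (hlong : 2 * b + 1 ≤ p.support.length)
    (H : SimpleGraph V) [DecidableRel H.Adj] (hHG : H ≤ G)
    (hcol : ∀ e ∈ H.edgeSet, ∀ f ∈ p.edges, c e ≠ c f)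
    (hST : b + 1 ≤
      (H.interedges (p.support.take b).toFinset (p.support.reverse.take b).toFinset).card) :
    ∃ s t : V, H.Adj s t ∧ s ∈ (p.support.take b).toFinset ∧
      t ∈ (p.support.reverse.take b).toFinset ∧
      ∃ q : G.Walk t t, q.IsCycle ∧ (q.edges.map c).Nodup ∧
        s(s, t) ∈ q.edges ∧ q.edges ⊆ s(s, t) :: p.edges ∧
        (p.length : ℤ) - 2 * b + 1 ≤ (q.length : ℤ) :=
  stmt15_general G C c b u v p hp hrb hlong H hHG hcol hST
end
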